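/- Let 𝒮 and 𝒲 be standard Borel spaces, P_S a probability measure on 𝒮, κ a Markov kernel from 𝒮 to 𝒲, and p_W = ∫ κ(s) dP_S(s) the marginal of the weights. Then for every probability measure q on 𝒲, ∫ KL(κ(s) ‖ q) dP_S(s) = ∫ KL(κ(s) ‖ p_W) dP_S(s) + KL(p_W ‖ q). In particular, the marginal p_W minimizes the expected Kullback–Leibler divergence q ↦ ∫ KL(κ(s) ‖ q) dP_S(s) over all probability measures q on 𝒲. -/

import Mathlib

open MeasureTheory ProbabilityTheory Real Classical ENNReal

/-- The Kullback–Leibler divergence `KL(ν‖μ)` valued in `[0,∞]`, equal to `∫ log (dν/dμ) dν`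
when `ν ≪ μ` (and the log-likelihood ratio is integrable), and `+∞` otherwise. -/
noncomputable def klDiv {Ω : Type*} [MeasurableSpace Ω] (ν μ : Measure Ω) : ℝ≥0∞ :=
  if ν ≪ μ ∧ Integrable (llr ν μ) ν then ENNReal.ofReal (∫ ω, llr ν μ ω ∂ν) else ⊤

/-!
Write `P = P_S ⊗ κ` for the joint law of `(S, W)`. The average `∫ KL(κ(s) ‖ q) dP_S` is the
divergence `KL(P ‖ P_S ⊗ q)`. Disintegrating `P` along `𝒲` instead, `P = p_W ⊗ κ†` with the
posterior kernel `κ†` (which exists since `𝒮` is standard Borel), and the chain rule splits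
`KL(p_W ⊗ κ† ‖ q ⊗ P_S)` into `KL(p_W ‖ q) + KL(p_W ⊗ κ† ‖ p_W ⊗ P_S)`; the last term is
`KL(P ‖ P_S ⊗ p_W) = ∫ KL(κ(s) ‖ p_W) dP_S`.
-/

-- Mathlib's divergence carries the correction `ν(univ) - μ(univ)`, which vanishes here.
lemma klDiv_eq_informationTheory_klDiv {Ω : Type*} [MeasurableSpace Ω] (μ ν : Measure Ω)
    [IsProbabilityMeasure μ] [IsProbabilityMeasure ν] :
    klDiv μ ν = InformationTheory.klDiv μ ν := by
  rw [klDiv, InformationTheory.klDiv_def]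
  simp

namespace ProbabilityTheory

variable {α β : Type*} {mα : MeasurableSpace α} {mβ : MeasurableSpace β}
  [MeasurableSpace.CountableOrCountablyGenerated α β]

lemma rnDeriv_measure_compProd_right (μ : Measure α) [IsFiniteMeasure μ] (κ η : Kernel α β)
    [IsFiniteKernel κ] [IsFiniteKernel η] :
    (μ ⊗ₘ κ).rnDeriv (μ ⊗ₘ η) =ᵐ[μ ⊗ₘ η] fun p ↦ κ.rnDeriv η p.1 p.2 := by
  have h_sing : μ ⊗ₘ κ.singularPart η ⟂ₘ μ ⊗ₘ η :=
    Measure.MutuallySingular.compProd_of_right μ μ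
      (.of_forall <| Kernel.mutuallySingular_singularPart _ _)
  have h_wd := Measure.rnDeriv_withDensity (μ ⊗ₘ η) (κ.measurable_rnDeriv η)
  rw [← Measure.compProd_withDensity (κ.measurable_rnDeriv η)] at h_wd
  conv_lhs => rw [← κ.rnDeriv_add_singularPart η, Measure.compProd_add_right]
  filter_upwards [Measure.rnDeriv_add' (μ ⊗ₘ η.withDensity (κ.rnDeriv η))
      (μ ⊗ₘ κ.singularPart η) (μ ⊗ₘ η), h_wd,
    Measure.rnDeriv_eq_zero_of_mutuallySingular h_sing Measure.AbsolutelyContinuous.rfl]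
    with p h_add h_wd h_zero
  simp [h_add, h_wd, h_zero]

end ProbabilityTheory

namespace InformationTheory

variable {α β : Type*} {mα : MeasurableSpace α} {mβ : MeasurableSpace β}

lemma klDiv_map_measurableEquiv (μ ν : Measure α) [IsFiniteMeasure μ] [IsFiniteMeasure ν]
    (e : α ≃ᵐ β) : klDiv (μ.map e) (ν.map e) = klDiv μ ν := by
  refine le_antisymm (klDiv_map_le μ ν e.measurable) ?_
  calc klDiv μ ν = klDiv ((μ.map e).map e.symm) ((ν.map e).map e.symm) := by
        simp [Measure.map_map e.symm.measurable e.measurable]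
    _ ≤ klDiv (μ.map e) (ν.map e) := klDiv_map_le _ _ e.symm.measurable

lemma klDiv_compProd_right [MeasurableSpace.CountableOrCountablyGenerated α β]
    (μ : Measure α) [IsFiniteMeasure μ] (κ η : Kernel α β) [IsFiniteKernel κ] [IsFiniteKernel η] :
    klDiv (μ ⊗ₘ κ) (μ ⊗ₘ η) = ∫⁻ a, klDiv (κ a) (η a) ∂μ := by
  by_cases h_ac : ∀ᵐ a ∂μ, κ a ≪ η a
  · rw [klDiv_eq_lintegral_klFun_of_ac (Measure.absolutelyContinuous_compProd_right_iff.2 h_ac)]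
    calc ∫⁻ p, ENNReal.ofReal (klFun ((μ ⊗ₘ κ).rnDeriv (μ ⊗ₘ η) p).toReal) ∂μ ⊗ₘ η
        = ∫⁻ p, ENNReal.ofReal (klFun (κ.rnDeriv η p.1 p.2).toReal) ∂μ ⊗ₘ η := by
          refine lintegral_congr_ae ?_
          filter_upwards [rnDeriv_measure_compProd_right μ κ η] with p hp
          rw [hp]
      _ = ∫⁻ a, ∫⁻ b, ENNReal.ofReal (klFun (κ.rnDeriv η a b).toReal) ∂η a ∂μ :=
          Measure.lintegral_compProd (by fun_prop)
      _ = ∫⁻ a, klDiv (κ a) (η a) ∂μ := by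
          refine lintegral_congr_ae ?_
          filter_upwards [h_ac] with a ha
          rw [klDiv_eq_lintegral_klFun_of_ac ha]
          refine lintegral_congr_ae ?_
          filter_upwards [κ.rnDeriv_eq_rnDeriv_measure (η := η) (a := a)] with b hb
          rw [hb]
  · rw [klDiv_of_not_ac (mt Measure.absolutelyContinuous_compProd_right_iff.1 h_ac), eq_comm,
      eq_top_iff]
    have hs : MeasurableSet {a | κ a ≪ η a}ᶜ := (κ.measurableSet_absolutelyContinuous η).compl
    have hμs : μ {a | κ a ≪ η a}ᶜ ≠ 0 := fun h ↦ h_ac (ae_iff.2 h)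
    calc ∞ = ∫⁻ a, {a | κ a ≪ η a}ᶜ.indicator (fun _ ↦ ∞) a ∂μ := by
          rw [lintegral_indicator_const hs, top_mul hμs]
      _ ≤ ∫⁻ a, klDiv (κ a) (η a) ∂μ :=
          lintegral_mono (Set.indicator_le fun a ha ↦ (klDiv_of_not_ac ha).ge)

lemma klDiv_compProd_prod_eq_add [StandardBorelSpace α] (μ : Measure α) [IsProbabilityMeasure μ]
    (κ : Kernel α β) [IsFiniteKernel κ] (ν : Measure β) [IsFiniteMeasure ν] :
    klDiv (μ ⊗ₘ κ) (μ.prod ν) = klDiv (κ ∘ₘ μ) ν + klDiv (μ ⊗ₘ κ) (μ.prod (κ ∘ₘ μ)) := by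
  have := nonempty_of_isProbabilityMeasure μ
  set ρ := (μ ⊗ₘ κ).map Prod.swap
  have h_disintegrate : (κ ∘ₘ μ) ⊗ₘ ρ.condKernel = ρ := by
    conv_rhs => rw [← ρ.disintegrate ρ.condKernel]
    rw [Measure.fst_map_swap, Measure.snd_compProd]
  have h_swap (ν' : Measure β) [IsFiniteMeasure ν'] :
      klDiv (μ ⊗ₘ κ) (μ.prod ν') = klDiv ρ (ν' ⊗ₘ Kernel.const β μ) := by
    rw [Measure.compProd_const, ← Measure.prod_swap (μ := μ) (ν := ν')]
    exact (klDiv_map_measurableEquiv (μ ⊗ₘ κ) (μ.prod ν') MeasurableEquiv.prodComm).symm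
  rw [h_swap, h_swap, ← h_disintegrate]
  exact klDiv_compProd_eq_add _ _ _ _

end InformationTheory

/-- Oracle-prior property of the weight marginal: for every probability measure `q` on `𝒲`,
`∫ KL(κ(s)‖q) dP_S = ∫ KL(κ(s)‖p_W) dP_S + KL(p_W‖q)`; in particular the marginal
`p_W = ∫ κ(s) dP_S(s)` minimizes `q ↦ ∫ KL(κ(s)‖q) dP_S` over probability measures `q`. -/
theorem marginal_is_oracle_prior
    {S W : Type*} [MeasurableSpace S] [StandardBorelSpace S]
    [MeasurableSpace W] [StandardBorelSpace W]
    (PS : Measure S) [IsProbabilityMeasure PS]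
    (κ : Kernel S W) [IsMarkovKernel κ]
    (pW : Measure W) (hpW : pW = PS.bind fun s => κ s) :
    ∀ (q : Measure W), IsProbabilityMeasure q →
      (∫⁻ s, klDiv (κ s) q ∂PS = (∫⁻ s, klDiv (κ s) pW ∂PS) + klDiv pW q) ∧
      (∫⁻ s, klDiv (κ s) pW ∂PS ≤ ∫⁻ s, klDiv (κ s) q ∂PS) := by
  intro q hq
  subst hpW
  have h_cond (ν : Measure W) [IsFiniteMeasure ν] :
      ∫⁻ s, InformationTheory.klDiv (κ s) ν ∂PS =
        InformationTheory.klDiv (PS ⊗ₘ κ) (PS.prod ν) := by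
    simp [← Measure.compProd_const, InformationTheory.klDiv_compProd_right]
  have h_chain : ∫⁻ s, klDiv (κ s) q ∂PS =
      (∫⁻ s, klDiv (κ s) (κ ∘ₘ PS) ∂PS) + klDiv (κ ∘ₘ PS) q := by
    simp only [klDiv_eq_informationTheory_klDiv, h_cond,
      InformationTheory.klDiv_compProd_prod_eq_add PS κ q]
    rw [add_comm]
  exact ⟨h_chain, h_chain ▸ le_self_add⟩
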